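/- Let m̂ ∈ P₂(ℝ^d), R > 0, φ ∈ UC_m̂, κ ∈ (0,1], ε > 0, m ∈ B_R(m̂), let μ̄ be an Ekeland point for (φ,κ,ε,m) and π ∈ Π_o(m,μ̄). Let b : ℝ^d → ℝ^d be Borel with ∫‖b‖²dm < ∞, τ > 0, and ν = (Id + τb)♯m. Then φ_κ(ν) ≤ φ_κ(m) + τ·∫((x−y)/κ²)·b(x) dπ(x,y) + (τ²/(2κ²))·∫‖b(x)‖²dm(x) + N_κ^ε(R,m). -/

import Mathlib

/-!
Testing the infimum defining `φ_κ(ν)` with `μ̄` gives `φ_κ(ν) ≤ φ(μ̄) + W₂(ν, μ̄)² / (2κ²)`.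
Pushing the optimal plan `π` forward by `(x, y) ↦ (x + τ b(x), y)` couples `ν` with `μ̄`, and
expanding the square bounds `W₂(ν, μ̄)²` by
`W₂(m, μ̄)² + 2τ ∫ ⟨x - y, b(x)⟩ dπ + τ² ∫ ‖b‖² dm`.

It remains to show `φ(μ̄) + W₂(m, μ̄)² / (2κ²) ≤ φ_κ(m) + N_κ^ε(R, m)`. Ekeland's inequality
against a competitor `μ` costs `ε W₂(μ̄, μ) ≤ ε (W₂(μ̄, m) + W₂(m, μ))`. The first term is at most
`M_κ^ε(R)`: the first Ekeland inequality gives `W₂²/(2κ²) + ε W₂ ≤ φ(m) ≤ S(R)`, a quadratic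
inequality in `W₂ = W₂(m, μ̄)`. The second is at most `κ √(2 a_μ)`, where `a_μ` is the value of
the objective of `φ_κ(m)` at `μ`; taking the infimum over `μ` of the monotone continuous function
`a ↦ a + εκ √(2a)` turns this into `εκ √(2 φ_κ(m))`.

`S(R)` is finite because `φ`, uniformly continuous on bounded sets, is bounded on balls: by
linear interpolation along near-optimal plans, every point of a ball is joined to `m̂` by a chain
of boundedly many `W₂`-short steps inside a slightly larger ball.
-/

open MeasureTheory Set Filter Topology
open scoped ENNReal NNReal InnerProductSpace

noncomputable section

/-- `ℝ^d` with the Euclidean structure. -/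
abbrev Ed (d : ℕ) : Type := EuclideanSpace ℝ (Fin d)

/-- A Borel probability measure with finite second moment. -/
def IsP2Meas {E : Type*} [NormedAddCommGroup E] [MeasurableSpace E] (μ : Measure E) : Prop :=
  IsProbabilityMeasure μ ∧ ∫⁻ x, (‖x‖₊ : ℝ≥0∞) ^ 2 ∂μ < ⊤

/-- The Wasserstein space `P₂(ℝ^d)` of Borel probability measures with finite second moment. -/
def P2 (d : ℕ) : Type := {μ : Measure (Ed d) // IsP2Meas μ}

/-- `ς₂(μ)`, the square root of the second moment of `μ`. -/
def varsigma2 {d : ℕ} (μ : P2 d) : ℝ :=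
  Real.sqrt (∫⁻ x, (‖x‖₊ : ℝ≥0∞) ^ 2 ∂μ.1).toReal

/-- `π` is a plan (coupling) between `μ` and `ν`. -/
def IsCoupling {d : ℕ} (π : Measure (Ed d × Ed d)) (μ ν : P2 d) : Prop :=
  π.map Prod.fst = μ.1 ∧ π.map Prod.snd = ν.1

/-- The quadratic transport cost of a plan. -/
def Wcost {d : ℕ} (π : Measure (Ed d × Ed d)) : ℝ≥0∞ :=
  ∫⁻ p, (‖p.1 - p.2‖₊ : ℝ≥0∞) ^ 2 ∂π

/-- The 2-Wasserstein distance. -/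
def W2 {d : ℕ} (μ ν : P2 d) : ℝ :=
  Real.sqrt (⨅ π ∈ {π : Measure (Ed d × Ed d) | IsCoupling π μ ν}, Wcost π).toReal

/-- `π ∈ Π_o(μ,ν)` : an optimal plan between `μ` and `ν`. -/
def IsOptPlan {d : ℕ} (π : Measure (Ed d × Ed d)) (μ ν : P2 d) : Prop :=
  IsCoupling π μ ν ∧ ∀ π' : Measure (Ed d × Ed d), IsCoupling π' μ ν → Wcost π ≤ Wcost π'

/-- The closed Wasserstein ball `B_R(m̂)`. -/
def ballW {d : ℕ} (mhat : P2 d) (R : ℝ) : Set (P2 d) := {μ | W2 mhat μ ≤ R}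

/-- The open Wasserstein ball `O_R(m̂)`. -/
def oballW {d : ℕ} (mhat : P2 d) (R : ℝ) : Set (P2 d) := {μ | W2 mhat μ < R}

/-- The Dirac measure at the origin as an element of `P₂(ℝ^d)`. -/
def dirac0 (d : ℕ) : P2 d :=
  ⟨Measure.dirac 0, ⟨by infer_instance, by rw [lintegral_dirac]; simp⟩⟩

/-- The class `UC_m̂` : nonnegative, uniformly continuous on every bounded set,
positive-definite at `m̂`. -/
structure UCmem {d : ℕ} (mhat : P2 d) (φ : P2 d → ℝ) : Prop where
  nonneg : ∀ μ : P2 d, 0 ≤ φ μ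
  unif_cont : ∀ R > (0 : ℝ), ∀ η > (0 : ℝ), ∃ δ > (0 : ℝ), ∀ μ ν : P2 d,
    W2 mhat μ ≤ R → W2 mhat ν ≤ R → W2 μ ν ≤ δ → |φ μ - φ ν| ≤ η
  zero_at : φ mhat = 0
  pos_off : ∀ μ : P2 d, μ ≠ mhat → 0 < φ μ

/-- The inf-convolution `φ_κ`. -/
def infConv {d : ℕ} (φ : P2 d → ℝ) (κ : ℝ) (m : P2 d) : ℝ :=
  ⨅ μ : P2 d, (φ μ + 1 / (2 * κ ^ 2) * W2 m μ ^ 2)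

/-- `S(R) = sup_{μ ∈ B_R(m̂)} φ(μ)`. -/
def Sfun {d : ℕ} (mhat : P2 d) (φ : P2 d → ℝ) (R : ℝ) : ℝ := sSup (φ '' ballW mhat R)

/-- `I(R) = inf_{μ ∉ O_R(m̂)} φ(μ)`. -/
def Ifun {d : ℕ} (mhat : P2 d) (φ : P2 d → ℝ) (R : ℝ) : ℝ := sInf (φ '' (oballW mhat R)ᶜ)

/-- `G_R = {μ : φ(μ) ≤ I(R)/2}`. -/
def Gset {d : ℕ} (mhat : P2 d) (φ : P2 d → ℝ) (R : ℝ) : Set (P2 d) :=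
  {μ | φ μ ≤ Ifun mhat φ R / 2}

/-- `G_R^κ = {μ : φ_κ(μ) ≤ I(R)/2}`. -/
def GsetK {d : ℕ} (mhat : P2 d) (φ : P2 d → ℝ) (κ R : ℝ) : Set (P2 d) :=
  {μ | infConv φ κ μ ≤ Ifun mhat φ R / 2}

/-- `𝓡(R) = sup{r ≥ 0 : B_r(m̂) ⊆ G_R}`. -/
def Rfun {d : ℕ} (mhat : P2 d) (φ : P2 d → ℝ) (R : ℝ) : ℝ :=
  sSup {r : ℝ | 0 ≤ r ∧ ballW mhat r ⊆ Gset mhat φ R}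

/-- `M_κ^ε(R) = κ√(2S(R)+ε²κ²) − εκ²`. -/
def Mke {d : ℕ} (mhat : P2 d) (φ : P2 d → ℝ) (κ ε R : ℝ) : ℝ :=
  κ * Real.sqrt (2 * Sfun mhat φ R + ε ^ 2 * κ ^ 2) - ε * κ ^ 2

/-- `M^ε(R) = R + √(2S(R)+ε²)`. -/
def Me {d : ℕ} (mhat : P2 d) (φ : P2 d → ℝ) (ε R : ℝ) : ℝ :=
  R + Real.sqrt (2 * Sfun mhat φ R + ε ^ 2)

/-- `ω_R^ε(δ)`, the modulus of continuity of `φ` on `B_{M^ε(R)}(m̂)`. -/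
def omegaR {d : ℕ} (mhat : P2 d) (φ : P2 d → ℝ) (ε R δ : ℝ) : ℝ :=
  sSup {c : ℝ | ∃ ν₁ ν₂ : P2 d, W2 ν₁ ν₂ ≤ δ ∧ W2 mhat ν₁ ≤ Me mhat φ ε R ∧
    W2 mhat ν₂ ≤ Me mhat φ ε R ∧ c = |φ ν₁ - φ ν₂|}

/-- `K_κ^ε(R) = εκ² + κ√(ε²κ² + 2ω_R^ε(M_κ^ε(R)))`. -/
def Kke {d : ℕ} (mhat : P2 d) (φ : P2 d → ℝ) (κ ε R : ℝ) : ℝ :=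
  ε * κ ^ 2 + κ * Real.sqrt (ε ^ 2 * κ ^ 2 + 2 * omegaR mhat φ ε R (Mke mhat φ κ ε R))

/-- `N_κ^ε(R,m) = εκ√(2φ_κ(m)) + ε·M_κ^ε(R)`. -/
def Nke {d : ℕ} (mhat : P2 d) (φ : P2 d → ℝ) (κ ε R : ℝ) (m : P2 d) : ℝ :=
  ε * κ * Real.sqrt (2 * infConv φ κ m) + ε * Mke mhat φ κ ε R

/-- `μ̄` is an Ekeland point for `(φ,κ,ε,m)`. -/
def EkelandPt {d : ℕ} (φ : P2 d → ℝ) (κ ε : ℝ) (m μb : P2 d) : Prop :=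
  (φ μb + 1 / (2 * κ ^ 2) * W2 m μb ^ 2 ≤ φ m - ε * W2 μb m) ∧
  ∀ μ : P2 d, φ μb + 1 / (2 * κ ^ 2) * W2 m μb ^ 2 ≤
    φ μ + 1 / (2 * κ ^ 2) * W2 m μ ^ 2 + ε * W2 μb μ

/-- The proximal subgradient inequality at `m` with target `μ`, slope measure `α`
and parameter `σ`. -/
def ProxIneq {d : ℕ} (φ : P2 d → ℝ) (ε σ : ℝ) (m : P2 d)
    (α : Measure (Ed d × Ed d)) (μ : P2 d) : Prop :=
  ∀ β : Measure (Ed d × Ed d × Ed d), IsP2Meas β →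
    IsCoupling (β.map fun z => (z.1, z.2.1)) m μ →
    β.map (fun z => (z.1, z.2.2)) = α →
    φ m + ∫ z, ⟪z.2.2, z.2.1 - z.1⟫_ℝ ∂β - σ * ∫ z, ‖z.2.1 - z.1‖ ^ 2 ∂β
      - ε * W2 m μ ≤ φ μ

/-- `α ∈ ∂_P^ε φ(m)` : proximal `ε`-subgradient. -/
def ProxSubgrad {d : ℕ} (φ : P2 d → ℝ) (ε : ℝ) (m : P2 d)
    (α : Measure (Ed d × Ed d)) : Prop :=
  IsP2Meas α ∧ ∃ σ > (0 : ℝ), ∃ r > (0 : ℝ), ∀ μ : P2 d, W2 m μ ≤ r → ProxIneq φ ε σ m α μ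

/-- `(φ,ψ)` is a control-Lyapunov pair at `m̂` for the dynamics `f`, with threshold `ε₀`. -/
structure IsCLP {d : ℕ} {U : Type*} (f : Ed d → P2 d → U → Ed d) (mhat : P2 d)
    (φ : P2 d → ℝ) (ψ : P2 d → ℝ → ℝ) (ε₀ : ℝ) : Prop where
  phi_uc : UCmem mhat φ
  psi_pos : ∀ (m : P2 d) (ε : ℝ), 0 < ε → 0 < ψ m ε
  psi_cont : ∀ (m : P2 d) (ε : ℝ), 0 < ε → ∀ η > (0 : ℝ), ∃ δ > (0 : ℝ),
    ∀ (m' : P2 d) (ε' : ℝ), 0 < ε' → W2 m m' < δ → |ε - ε'| < δ → |ψ m ε - ψ m' ε'| < η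
  level_bdd : ∀ c : ℝ, ∃ K : ℝ, ∀ μ : P2 d, φ μ ≤ c → W2 mhat μ ≤ K
  psi_inf_pos : ∀ r R : ℝ, 0 < r → r < R → ∀ ε > (0 : ℝ), ∃ g > (0 : ℝ),
    ∀ m : P2 d, W2 mhat m ≤ R → ¬ W2 mhat m < r → g ≤ ψ m ε
  psi_mono : ∀ (m : P2 d) (ε ε' : ℝ), 0 < ε → ε ≤ ε' → ψ m ε ≤ ψ m ε'
  eps0_pos : 0 < ε₀
  decrease : ∀ ε : ℝ, 0 < ε → ε < ε₀ → ∀ (m : P2 d) (α : Measure (Ed d × Ed d)),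
    ProxSubgrad φ ε m α → ∃ u : U, ∫ z, ⟪z.2, f z.1 m u⟫_ℝ ∂α ≤ -ψ m ε

/-- A partition of `[0,∞)`. -/
def IsPartition (θ : ℕ → ℝ) : Prop :=
  θ 0 = 0 ∧ StrictMono θ ∧ Tendsto θ atTop atTop

/-- The steps of the partition `θ` lie in `[δ₁, δ₂]` (i.e. `θ ∈ Θ(δ₁,δ₂)`). -/
def StepIn (θ : ℕ → ℝ) (δ₁ δ₂ : ℝ) : Prop :=
  ∀ i : ℕ, δ₁ ≤ θ (i + 1) - θ i ∧ θ (i + 1) - θ i ≤ δ₂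

/-- `W₂`-continuity of a measure-valued curve on `[a,b]`. -/
def W2ContinuousOn {d : ℕ} (m : ℝ → P2 d) (a b : ℝ) : Prop :=
  ∀ t ∈ Icc a b, ∀ η > (0 : ℝ), ∃ δ > (0 : ℝ), ∀ s ∈ Icc a b, |s - t| < δ →
    W2 (m s) (m t) < η

/-- `m` is a `W₂`-continuous distributional solution of the non-local continuity equation
`∂_t m_t + div(f(x,m_t,u) m_t) = 0` on `[a,b]` with constant control `u`. -/
def SolvesCE {d : ℕ} {U : Type*} (f : Ed d → P2 d → U → Ed d) (u : U)
    (m : ℝ → P2 d) (a b : ℝ) : Prop :=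
  W2ContinuousOn m a b ∧
  ∀ χ : Ed d × ℝ → ℝ, ContDiff ℝ (⊤ : ℕ∞) χ → HasCompactSupport χ →
    tsupport χ ⊆ univ ×ˢ Ioo a b →
    ∫ t in a..b, ∫ x, (deriv (fun s : ℝ => χ (x, s)) t +
      fderiv ℝ (fun y : Ed d => χ (y, t)) x (f x (m t) u)) ∂(m t).1 = 0

/-- A `θ`-trajectory of the controlled continuity equation under the feedback `k`,
starting from `m_*`. -/
def IsTraj {d : ℕ} {U : Type*} (f : Ed d → P2 d → U → Ed d) (k : P2 d → U)
    (θ : ℕ → ℝ) (mstar : P2 d) (m : ℝ → P2 d) : Prop :=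
  m 0 = mstar ∧ ∀ i : ℕ, SolvesCE f (k (m (θ i))) m (θ i) (θ (i + 1))

/-- The extremal-shift value `∫ ((x−y)/κ²)·f(x,m,u) dπ(x,y)`. -/
def shiftVal {d : ℕ} {U : Type*} (f : Ed d → P2 d → U → Ed d) (κ : ℝ)
    (π : Measure (Ed d × Ed d)) (m : P2 d) (u : U) : ℝ :=
  ∫ p, ⟪(κ ^ 2)⁻¹ • (p.1 - p.2), f p.1 m u⟫_ℝ ∂π

/-- `k` is an extremal-shift feedback associated with the plan selection `πsel`. -/
def IsExtremalShift {d : ℕ} {U : Type*} (f : Ed d → P2 d → U → Ed d) (κ : ℝ)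
    (πsel : P2 d → Measure (Ed d × Ed d)) (k : P2 d → U) : Prop :=
  ∀ (m : P2 d) (u : U), shiftVal f κ (πsel m) m (k m) ≤ shiftVal f κ (πsel m) m u

/-- `C₂(R)` (computed with time-step bound `δ` and `s = ς₂(m̂)`). -/
def C2const (C₁ δ s R : ℝ) : ℝ :=
  C₁ * Real.exp (C₁ * δ) * (1 + 2 * (C₁ * δ + s + R) * Real.exp (2 * C₁ * δ))

/-- `C₃(R)` (computed with time-step bound `δ` and `s = ς₂(m̂)`). -/
def C3const (C₀ C₁ δ s R : ℝ) : ℝ :=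
  C₀ * (C₁ * Real.exp (C₁ * δ) * (1 + 2 * (C₁ * δ + s + R) * Real.exp (2 * C₁ * δ))
    + C2const C₁ δ s R)

/-- A feedback `k` is s-stabilizing at `m̂`. -/
def SStabilizing {d : ℕ} {U : Type*} (f : Ed d → P2 d → U → Ed d) (mhat : P2 d)
    (k : P2 d → U) : Prop :=
  ∃ M : ℝ → ℝ, (∀ R > (0 : ℝ), 0 < M R) ∧
    Tendsto M (nhdsWithin 0 (Ioi 0)) (nhds 0) ∧
    ∀ r R : ℝ, 0 < r → r < R → ∃ δ > (0 : ℝ), ∃ T > (0 : ℝ),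
      ∀ δhat : ℝ, 0 < δhat → δhat < δ →
      ∀ θ : ℕ → ℝ, IsPartition θ → StepIn θ δhat δ →
      ∀ mstar : P2 d, W2 mhat mstar ≤ R →
      ∀ m : ℝ → P2 d, IsTraj f k θ mstar m →
        (∀ t : ℝ, T ≤ t → W2 mhat (m t) ≤ r) ∧ (∀ t : ℝ, 0 ≤ t → W2 mhat (m t) ≤ M R)

namespace MeasureTheory

variable {α E : Type*} [MeasurableSpace α] [NormedAddCommGroup E] {μ : Measure α}

lemma eLpNorm_two_sq_eq_lintegral (f : α → E) :
    eLpNorm f 2 μ ^ 2 = ∫⁻ x, (‖f x‖₊ : ℝ≥0∞) ^ 2 ∂μ := by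
  rw [eLpNorm_eq_lintegral_rpow_enorm_toReal two_ne_zero ENNReal.ofNat_ne_top,
    ← ENNReal.rpow_natCast, ← ENNReal.rpow_mul]
  norm_num [enorm_eq_nnnorm]

lemma memLp_two_iff_lintegral_sq_lt_top {f : α → E} (hf : AEStronglyMeasurable f μ) :
    MemLp f 2 μ ↔ ∫⁻ x, (‖f x‖₊ : ℝ≥0∞) ^ 2 ∂μ < ⊤ := by
  rw [← eLpNorm_two_sq_eq_lintegral, ENNReal.pow_lt_top_iff]
  simp [MemLp, hf]

lemma MemLp.toReal_eLpNorm_two_sq {f : α → E} (hf : MemLp f 2 μ) :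
    (eLpNorm f 2 μ).toReal ^ 2 = ∫ x, ‖f x‖ ^ 2 ∂μ := by
  rw [← ENNReal.toReal_pow, eLpNorm_two_sq_eq_lintegral,
    integral_eq_lintegral_of_nonneg_ae (ae_of_all _ fun _ => by positivity)
      (by have := hf.aestronglyMeasurable.norm; fun_prop)]
  congr 1
  refine lintegral_congr fun x => ?_
  rw [ENNReal.ofReal_pow (norm_nonneg _), ofReal_norm, enorm_eq_nnnorm]

lemma MemLp.integrable_real_inner [InnerProductSpace ℝ E] {f g : α → E} (hf : MemLp f 2 μ)
    (hg : MemLp g 2 μ) : Integrable (fun x => ⟪f x, g x⟫_ℝ) μ :=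
  (hf.norm.integrable_mul hg.norm).mono' (hf.1.inner hg.1)
    (ae_of_all _ fun x => by simpa using abs_real_inner_le_norm (f x) (g x))

end MeasureTheory

open ProbabilityTheory in
lemma exists_gluing {α β γ : Type*} [MeasurableSpace α] [MeasurableSpace β] [MeasurableSpace γ]
    [StandardBorelSpace β] [Nonempty β] [StandardBorelSpace γ] [Nonempty γ]
    (π₁ : Measure (α × β)) (π₂ : Measure (α × γ)) [IsFiniteMeasure π₁] [IsFiniteMeasure π₂]
    (h : π₁.fst = π₂.fst) :
    ∃ ξ : Measure (α × β × γ),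
      ξ.map (fun p => (p.1, p.2.1)) = π₁ ∧ ξ.map (fun p => (p.1, p.2.2)) = π₂ := by
  refine ⟨π₁.fst ⊗ₘ (π₁.condKernel ×ₖ π₂.condKernel), ?_, ?_⟩
  · change Measure.map (Prod.map id Prod.fst) _ = _
    rw [← Measure.compProd_map measurable_fst, ← Kernel.fst_eq, Kernel.fst_prod,
      Measure.disintegrate]
  · change Measure.map (Prod.map id Prod.snd) _ = _
    rw [← Measure.compProd_map measurable_snd, ← Kernel.snd_eq, Kernel.snd_prod, h,
      Measure.disintegrate]

lemma le_sqrt_sub_of_div_mul_sq_add_le {W κ ε S : ℝ} (hκ : 0 < κ)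
    (h : 1 / (2 * κ ^ 2) * W ^ 2 + ε * W ≤ S) :
    W ≤ κ * √(2 * S + ε ^ 2 * κ ^ 2) - ε * κ ^ 2 := by
  have hsq : (W + ε * κ ^ 2) ^ 2 ≤ κ ^ 2 * (2 * S + ε ^ 2 * κ ^ 2) := by
    have := mul_le_mul_of_nonneg_left h (by positivity : (0 : ℝ) ≤ 2 * κ ^ 2)
    field_simp at this
    nlinarith
  have := (le_abs_self _).trans (Real.abs_le_sqrt hsq)
  rw [Real.sqrt_mul (sq_nonneg κ), Real.sqrt_sq hκ.le] at this
  linarith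

section Wasserstein

variable {d : ℕ}

instance : Nonempty (P2 d) := ⟨dirac0 d⟩

lemma P2.isProbabilityMeasure (μ : P2 d) : IsProbabilityMeasure μ.1 := μ.2.1

lemma P2.memLp_id (μ : P2 d) : MemLp id 2 μ.1 :=
  (memLp_two_iff_lintegral_sq_lt_top aestronglyMeasurable_id).2 μ.2.2

lemma isP2Meas_map {Ω : Type*} [MeasurableSpace Ω] {P : Measure Ω} [IsProbabilityMeasure P]
    {f : Ω → Ed d} (hf : Measurable f) (hf2 : MemLp f 2 P) : IsP2Meas (P.map f) :=
  ⟨Measure.isProbabilityMeasure_map hf.aemeasurable,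
    (memLp_two_iff_lintegral_sq_lt_top aestronglyMeasurable_id).1
      ((memLp_map_measure_iff aestronglyMeasurable_id hf.aemeasurable).2 hf2)⟩

namespace IsCoupling

variable {π : Measure (Ed d × Ed d)} {μ ν : P2 d}

lemma isProbabilityMeasure (h : IsCoupling π μ ν) : IsProbabilityMeasure π := by
  have := μ.isProbabilityMeasure
  rw [← h.1] at this
  exact Measure.isProbabilityMeasure_of_map Prod.fst

lemma memLp_comp_fst (h : IsCoupling π μ ν) {g : Ed d → Ed d} (hg : Measurable g)
    (hg2 : MemLp g 2 μ.1) : MemLp (fun p => g p.1) 2 π := by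
  rw [← h.1] at hg2
  exact (memLp_map_measure_iff hg.aestronglyMeasurable measurable_fst.aemeasurable).1 hg2

lemma memLp_fst (h : IsCoupling π μ ν) : MemLp Prod.fst 2 π :=
  h.memLp_comp_fst measurable_id μ.memLp_id

lemma memLp_snd (h : IsCoupling π μ ν) : MemLp Prod.snd 2 π := by
  have := ν.memLp_id
  rw [← h.2] at this
  exact (memLp_map_measure_iff aestronglyMeasurable_id measurable_snd.aemeasurable).1 this

lemma memLp_sub (h : IsCoupling π μ ν) : MemLp (fun p => p.1 - p.2) 2 π :=
  h.memLp_fst.sub h.memLp_snd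

end IsCoupling

lemma Wcost_eq_eLpNorm_sq (π : Measure (Ed d × Ed d)) :
    Wcost π = eLpNorm (fun p => p.1 - p.2) 2 π ^ 2 :=
  (eLpNorm_two_sq_eq_lintegral _).symm

lemma isCoupling_map {Ω : Type*} [MeasurableSpace Ω] {P : Measure Ω} {f g : Ω → Ed d}
    (hf : Measurable f) (hg : Measurable g) {μ ν : P2 d} (hμ : μ.1 = P.map f)
    (hν : ν.1 = P.map g) : IsCoupling (P.map fun ω => (f ω, g ω)) μ ν := by
  constructor
  · rw [Measure.map_map measurable_fst (hf.prodMk hg), hμ]; rfl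
  · rw [Measure.map_map measurable_snd (hf.prodMk hg), hν]; rfl

lemma W2_sq_eq (μ ν : P2 d) :
    W2 μ ν ^ 2 = (⨅ π ∈ {π : Measure (Ed d × Ed d) | IsCoupling π μ ν}, Wcost π).toReal :=
  Real.sq_sqrt ENNReal.toReal_nonneg

lemma W2_nonneg (μ ν : P2 d) : 0 ≤ W2 μ ν := Real.sqrt_nonneg _

lemma isCoupling_prod (μ ν : P2 d) : IsCoupling (μ.1.prod ν.1) μ ν := by
  have := μ.isProbabilityMeasure
  have := ν.isProbabilityMeasure
  exact ⟨by simp, by simp⟩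

lemma iInf_Wcost_ne_top (μ ν : P2 d) :
    ⨅ π ∈ {π : Measure (Ed d × Ed d) | IsCoupling π μ ν}, Wcost π ≠ ⊤ := by
  refine ne_top_of_le_ne_top ?_ (iInf₂_le (μ.1.prod ν.1) (isCoupling_prod μ ν))
  rw [Wcost_eq_eLpNorm_sq]
  exact ENNReal.pow_ne_top (isCoupling_prod μ ν).memLp_sub.eLpNorm_ne_top

lemma W2_le_of_isCoupling {π : Measure (Ed d × Ed d)} {μ ν : P2 d} (h : IsCoupling π μ ν) :
    W2 μ ν ≤ (eLpNorm (fun p => p.1 - p.2) 2 π).toReal :=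
  calc W2 μ ν ≤ √((eLpNorm (fun p => p.1 - p.2) 2 π ^ 2).toReal) := by
        refine Real.sqrt_le_sqrt (ENNReal.toReal_mono
          (ENNReal.pow_ne_top h.memLp_sub.eLpNorm_ne_top) ?_)
        rw [← Wcost_eq_eLpNorm_sq]
        exact iInf₂_le π h
    _ = _ := by rw [ENNReal.toReal_pow, Real.sqrt_sq ENNReal.toReal_nonneg]

lemma exists_isCoupling_lt (μ ν : P2 d) {c : ℝ} (hc : W2 μ ν < c) :
    ∃ π, IsCoupling π μ ν ∧ (eLpNorm (fun p => p.1 - p.2) 2 π).toReal < c := by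
  have hc0 : 0 < c := (W2_nonneg μ ν).trans_lt hc
  have hlt : ⨅ π ∈ {π : Measure (Ed d × Ed d) | IsCoupling π μ ν}, Wcost π
      < ENNReal.ofReal c ^ 2 := by
    rw [← ENNReal.ofReal_pow hc0.le, ENNReal.lt_ofReal_iff_toReal_lt (iInf_Wcost_ne_top μ ν),
      ← W2_sq_eq]
    exact pow_lt_pow_left₀ hc (W2_nonneg μ ν) two_ne_zero
  simp only [iInf_lt_iff, Wcost_eq_eLpNorm_sq] at hlt
  obtain ⟨π, hπ, hlt⟩ := hlt
  exact ⟨π, hπ, ENNReal.toReal_lt_of_lt_ofReal ((ENNReal.pow_lt_pow_left_iff two_ne_zero).1 hlt)⟩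

lemma W2_le_of_map {Ω : Type*} [MeasurableSpace Ω] {P : Measure Ω} {f g : Ω → Ed d}
    (hf : Measurable f) (hg : Measurable g) {μ ν : P2 d} (hμ : μ.1 = P.map f)
    (hν : ν.1 = P.map g) : W2 μ ν ≤ (eLpNorm (fun ω => f ω - g ω) 2 P).toReal := by
  refine (W2_le_of_isCoupling (isCoupling_map hf hg hμ hν)).trans_eq ?_
  rw [eLpNorm_map_measure (by fun_prop) (hf.prodMk hg).aemeasurable]
  rfl

lemma W2_sq_le_integral_of_map {Ω : Type*} [MeasurableSpace Ω] {P : Measure Ω}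
    {f g : Ω → Ed d} (hf : Measurable f) (hg : Measurable g)
    (hfg : MemLp (fun ω => f ω - g ω) 2 P) {μ ν : P2 d} (hμ : μ.1 = P.map f)
    (hν : ν.1 = P.map g) : W2 μ ν ^ 2 ≤ ∫ ω, ‖f ω - g ω‖ ^ 2 ∂P := by
  rw [← hfg.toReal_eLpNorm_two_sq]
  exact pow_le_pow_left₀ (W2_nonneg μ ν) (W2_le_of_map hf hg hμ hν) 2

lemma IsOptPlan.W2_sq_eq_integral {π : Measure (Ed d × Ed d)} {μ ν : P2 d}
    (h : IsOptPlan π μ ν) : W2 μ ν ^ 2 = ∫ p, ‖p.1 - p.2‖ ^ 2 ∂π := by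
  have hinf : ⨅ π' ∈ {π' : Measure (Ed d × Ed d) | IsCoupling π' μ ν}, Wcost π' = Wcost π :=
    le_antisymm (iInf₂_le π h.1) (le_iInf₂ h.2)
  rw [W2_sq_eq, hinf, Wcost_eq_eLpNorm_sq, ENNReal.toReal_pow, h.1.memLp_sub.toReal_eLpNorm_two_sq]

lemma W2_comm (μ ν : P2 d) : W2 μ ν = W2 ν μ := by
  suffices h : ∀ μ ν : P2 d, W2 ν μ ≤ W2 μ ν from le_antisymm (h ν μ) (h μ ν)
  intro μ ν
  refine le_of_forall_gt_imp_ge_of_dense fun c hc => ?_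
  obtain ⟨π, hπ, hlt⟩ := exists_isCoupling_lt μ ν hc
  have h := W2_le_of_map measurable_snd measurable_fst hπ.2.symm hπ.1.symm
  have hneg : (fun p : Ed d × Ed d => p.2 - p.1) = -fun p => p.1 - p.2 := by
    ext1 p; exact (neg_sub p.1 p.2).symm
  rw [hneg, eLpNorm_neg] at h
  exact h.trans hlt.le

lemma W2_triangle (μ ν ρ : P2 d) : W2 μ ρ ≤ W2 μ ν + W2 ν ρ := by
  refine le_of_forall_pos_le_add fun δ hδ => ?_
  obtain ⟨π₁, hπ₁, h₁⟩ := exists_isCoupling_lt ν μ (lt_add_of_pos_right (W2 ν μ) (half_pos hδ))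
  obtain ⟨π₂, hπ₂, h₂⟩ := exists_isCoupling_lt ν ρ (lt_add_of_pos_right (W2 ν ρ) (half_pos hδ))
  have := hπ₁.isProbabilityMeasure
  have := hπ₂.isProbabilityMeasure
  obtain ⟨ξ, hξ₁, hξ₂⟩ := exists_gluing π₁ π₂ (by rw [Measure.fst, Measure.fst, hπ₁.1, hπ₂.1])
  have hμ : μ.1 = ξ.map fun p => p.2.1 := by
    rw [← hπ₁.2, ← hξ₁, Measure.map_map measurable_snd (by fun_prop)]; rfl
  have hρ : ρ.1 = ξ.map fun p => p.2.2 := by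
    rw [← hπ₂.2, ← hξ₂, Measure.map_map measurable_snd (by fun_prop)]; rfl
  have hnorm₁ : eLpNorm (fun p : Ed d × Ed d × Ed d => p.2.1 - p.1) 2 ξ
      = eLpNorm (fun p => p.1 - p.2) 2 π₁ := by
    rw [← hξ₁, eLpNorm_map_measure (by fun_prop) (by fun_prop), ← eLpNorm_neg]
    congr 1; ext1 p; simp
  have hnorm₂ : eLpNorm (fun p : Ed d × Ed d × Ed d => p.1 - p.2.2) 2 ξ
      = eLpNorm (fun p => p.1 - p.2) 2 π₂ := by
    rw [← hξ₂, eLpNorm_map_measure (by fun_prop) (by fun_prop)]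
    rfl
  have hmink : eLpNorm (fun p : Ed d × Ed d × Ed d => p.2.1 - p.2.2) 2 ξ
      ≤ eLpNorm (fun p => p.1 - p.2) 2 π₁ + eLpNorm (fun p => p.1 - p.2) 2 π₂ := by
    rw [← hnorm₁, ← hnorm₂]
    refine (eLpNorm_add_le (by fun_prop) (by fun_prop) one_le_two).trans_eq' ?_
    congr 1; ext1 p; simp
  calc W2 μ ρ ≤ (eLpNorm (fun p : Ed d × Ed d × Ed d => p.2.1 - p.2.2) 2 ξ).toReal :=
        W2_le_of_map (by fun_prop) (by fun_prop) hμ hρ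
    _ ≤ (eLpNorm (fun p => p.1 - p.2) 2 π₁).toReal + (eLpNorm (fun p => p.1 - p.2) 2 π₂).toReal :=
        ENNReal.toReal_le_add hmink hπ₁.memLp_sub.eLpNorm_ne_top hπ₂.memLp_sub.eLpNorm_ne_top
    _ ≤ W2 μ ν + W2 ν ρ + δ := by rw [W2_comm μ ν]; linarith

lemma exists_path_W2_le (μ ν : P2 d) {c : ℝ} (hc : W2 μ ν < c) :
    ∃ γ : ℝ → P2 d, γ 0 = μ ∧ γ 1 = ν ∧ ∀ s t, W2 (γ s) (γ t) ≤ |t - s| * c := by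
  obtain ⟨π, hπ, hlt⟩ := exists_isCoupling_lt μ ν hc
  have := hπ.isProbabilityMeasure
  let interp (t : ℝ) (p : Ed d × Ed d) : Ed d := (1 - t) • p.1 + t • p.2
  have hmeas (t : ℝ) : Measurable (interp t) := by fun_prop
  let γ (t : ℝ) : P2 d := ⟨π.map (interp t), isP2Meas_map (hmeas t)
    ((hπ.memLp_fst.const_smul (1 - t)).add (hπ.memLp_snd.const_smul t))⟩
  refine ⟨γ, Subtype.ext ?_, Subtype.ext ?_, fun s t => ?_⟩
  · change π.map (interp 0) = μ.1
    simpa [interp] using hπ.1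
  · change π.map (interp 1) = ν.1
    simpa [interp] using hπ.2
  · have hdiff : (fun p => interp s p - interp t p) = (t - s) • fun p => p.1 - p.2 := by
      ext1 p; simp only [interp, Pi.smul_apply]; module
    calc W2 (γ s) (γ t) ≤ (eLpNorm (fun p => interp s p - interp t p) 2 π).toReal :=
          W2_le_of_map (hmeas s) (hmeas t) rfl rfl
      _ = |t - s| * (eLpNorm (fun p => p.1 - p.2) 2 π).toReal := by
          rw [hdiff, eLpNorm_const_smul, ENNReal.toReal_mul, toReal_enorm, Real.norm_eq_abs]
      _ ≤ |t - s| * c := by gcongr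

lemma UCmem.bddAbove_image_ballW {mhat : P2 d} {φ : P2 d → ℝ} (hφ : UCmem mhat φ) (R : ℝ) :
    BddAbove (φ '' ballW mhat R) := by
  set r := max R 0 + 1
  obtain ⟨δ, hδ, huc⟩ := hφ.unif_cont r (by positivity) 1 one_pos
  have hr : 0 < r := by positivity
  set N := ⌈r / δ⌉₊
  have hN : (0 : ℝ) < N := Nat.cast_pos.2 (Nat.ceil_pos.2 (by positivity))
  refine ⟨N, ?_⟩
  rintro _ ⟨μ, hμ, rfl⟩
  obtain ⟨γ, hγ0, hγ1, hγ⟩ := exists_path_W2_le mhat μ (c := r)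
    ((show W2 mhat μ ≤ R from hμ).trans_lt (by linarith [le_max_left R 0]))
  have hball (k : ℕ) (hk : k ≤ N) : W2 mhat (γ (k / N)) ≤ r := by
    have hkN : (k / N : ℝ) ≤ 1 := div_le_one_of_le₀ (by exact_mod_cast hk) hN.le
    calc W2 mhat (γ (k / N)) ≤ |(k / N : ℝ) - 0| * r := hγ0 ▸ hγ 0 _
      _ ≤ r := by
          rw [sub_zero, abs_of_nonneg (by positivity)]
          exact mul_le_of_le_one_left hr.le hkN
  have hstep (k : ℕ) (hk : k < N) : φ (γ ((k + 1 : ℕ) / N)) - φ (γ (k / N)) ≤ 1 := by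
    refine (le_abs_self _).trans (huc _ _ (hball _ hk) (hball _ hk.le) ?_)
    calc W2 (γ ((k + 1 : ℕ) / N)) (γ (k / N)) ≤ |(k / N : ℝ) - (k + 1 : ℕ) / N| * r := hγ _ _
      _ = r / N := by
          push_cast
          rw [← sub_div, abs_div, abs_of_pos hN, sub_add_cancel_left, abs_neg, abs_one,
            one_div_mul_eq_div]
      _ ≤ δ := div_le_of_le_mul₀ hN.le hδ.le
          (by rw [mul_comm]; exact (div_le_iff₀ hδ).1 (Nat.le_ceil _))
  have hsum := Finset.sum_range_sub (fun k : ℕ => φ (γ (k / N))) N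
  simp only [div_self hN.ne', Nat.cast_zero, zero_div, hγ0, hγ1, hφ.zero_at, sub_zero] at hsum
  rw [← hsum]
  simpa using Finset.sum_le_card_nsmul _ _ 1 fun k hk => hstep k (Finset.mem_range.1 hk)

section InfConv

variable {φ : P2 d → ℝ} {κ : ℝ}

lemma infConv_bddBelow (hφ : ∀ μ, 0 ≤ φ μ) (m : P2 d) :
    BddBelow (range fun μ => φ μ + 1 / (2 * κ ^ 2) * W2 m μ ^ 2) := by
  refine ⟨0, ?_⟩
  rintro _ ⟨μ, rfl⟩
  have := hφ μ
  positivity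

lemma infConv_le (hφ : ∀ μ, 0 ≤ φ μ) (m μ : P2 d) :
    infConv φ κ m ≤ φ μ + 1 / (2 * κ ^ 2) * W2 m μ ^ 2 :=
  ciInf_le (infConv_bddBelow hφ m) μ

lemma W2_le_mul_sqrt (hφ : ∀ μ, 0 ≤ φ μ) (hκ : 0 < κ) (m μ : P2 d) :
    W2 m μ ≤ κ * √(2 * (φ μ + 1 / (2 * κ ^ 2) * W2 m μ ^ 2)) :=
  calc W2 m μ = √(W2 m μ ^ 2) := (Real.sqrt_sq (W2_nonneg m μ)).symm
    _ ≤ √(κ ^ 2 * (2 * (φ μ + 1 / (2 * κ ^ 2) * W2 m μ ^ 2))) := by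
        refine Real.sqrt_le_sqrt ?_
        have := hφ μ
        field_simp
        nlinarith
    _ = _ := by rw [Real.sqrt_mul (sq_nonneg κ), Real.sqrt_sq hκ.le]

variable {mhat m μb : P2 d} {ε R : ℝ}

lemma EkelandPt.W2_le_Mke (hφ : UCmem mhat φ) (hκ : 0 < κ) (hm : W2 mhat m ≤ R)
    (hek : EkelandPt φ κ ε m μb) : W2 m μb ≤ Mke mhat φ κ ε R := by
  refine le_sqrt_sub_of_div_mul_sq_add_le hκ ?_
  have hS : φ m ≤ Sfun mhat φ R := le_csSup (hφ.bddAbove_image_ballW R) (mem_image_of_mem φ hm)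
  have h1 := hek.1
  rw [W2_comm μb m] at h1
  linarith [hφ.nonneg μb]

lemma EkelandPt.le_infConv_add_Nke (hφ : UCmem mhat φ) (hκ : 0 < κ) (hε : 0 ≤ ε)
    (hm : W2 mhat m ≤ R) (hek : EkelandPt φ κ ε m μb) :
    φ μb + 1 / (2 * κ ^ 2) * W2 m μb ^ 2 ≤ infConv φ κ m + Nke mhat φ κ ε R m := by
  set g : ℝ → ℝ := fun s => s + ε * κ * √(2 * s)
  have hg_mono : Monotone g := fun s t hst => by
    have : √(2 * s) ≤ √(2 * t) := Real.sqrt_le_sqrt (by linarith)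
    have : 0 ≤ ε * κ := by positivity
    simp only [g]
    nlinarith
  have hg_cont : Continuous g := by fun_prop
  have hM := hek.W2_le_Mke hφ hκ hm
  have key (μ : P2 d) : φ μb + 1 / (2 * κ ^ 2) * W2 m μb ^ 2 - ε * Mke mhat φ κ ε R
      ≤ g (φ μ + 1 / (2 * κ ^ 2) * W2 m μ ^ 2) := by
    have htri : W2 μb μ ≤ Mke mhat φ κ ε R + κ * √(2 * (φ μ + 1 / (2 * κ ^ 2) * W2 m μ ^ 2)) :=
      (W2_triangle μb m μ).trans
        (add_le_add (W2_comm μb m ▸ hM) (W2_le_mul_sqrt hφ.nonneg hκ m μ))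
    have := mul_le_mul_of_nonneg_left htri hε
    have := hek.2 μ
    simp only [g]
    nlinarith
  have hinf : g (infConv φ κ m) = ⨅ μ, g (φ μ + 1 / (2 * κ ^ 2) * W2 m μ ^ 2) :=
    hg_mono.map_ciInf_of_continuousAt hg_cont.continuousAt (infConv_bddBelow hφ.nonneg m)
  have := hinf ▸ le_ciInf key
  simp only [g, Nke] at this ⊢
  linarith

end InfConv

lemma W2_sq_map_add_smul_le {π : Measure (Ed d × Ed d)} {μ ρ ν : P2 d}
    (hπ : IsCoupling π μ ρ) {b : Ed d → Ed d} (hb : Measurable b) (hb2 : MemLp b 2 μ.1) (τ : ℝ)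
    (hν : ν.1 = μ.1.map fun x => x + τ • b x) :
    W2 ν ρ ^ 2 ≤ ∫ p, ‖p.1 - p.2‖ ^ 2 ∂π + 2 * τ * ∫ p, ⟪p.1 - p.2, b p.1⟫_ℝ ∂π
      + τ ^ 2 * ∫ x, ‖b x‖ ^ 2 ∂μ.1 := by
  have hbπ : MemLp (fun p => b p.1) 2 π := hπ.memLp_comp_fst hb hb2
  have hν' : ν.1 = π.map fun p => p.1 + τ • b p.1 := by
    rw [hν, ← hπ.1, Measure.map_map (by fun_prop) measurable_fst]
    rfl
  have hbμ : ∫ x, ‖b x‖ ^ 2 ∂μ.1 = ∫ p, ‖b p.1‖ ^ 2 ∂π := by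
    rw [← hπ.1, integral_map measurable_fst.aemeasurable (by fun_prop)]
  have hexpand (p : Ed d × Ed d) : ‖p.1 + τ • b p.1 - p.2‖ ^ 2
      = ‖p.1 - p.2‖ ^ 2 + 2 * τ * ⟪p.1 - p.2, b p.1⟫_ℝ + τ ^ 2 * ‖b p.1‖ ^ 2 := by
    rw [add_sub_right_comm, norm_add_sq_real, real_inner_smul_right, norm_smul, mul_pow,
      Real.norm_eq_abs, sq_abs]
    ring
  calc W2 ν ρ ^ 2 ≤ ∫ p, ‖p.1 + τ • b p.1 - p.2‖ ^ 2 ∂π :=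
        W2_sq_le_integral_of_map (by fun_prop) measurable_snd
          ((hπ.memLp_fst.add (hbπ.const_smul τ)).sub hπ.memLp_snd) hν' hπ.2.symm
    _ = _ := by
        simp_rw [hexpand]
        rw [integral_add, integral_add, integral_const_mul, integral_const_mul, hbμ]
        · exact hπ.memLp_sub.integrable_norm_pow two_ne_zero
        · exact (hπ.memLp_sub.integrable_real_inner hbπ).const_mul _
        · exact (hπ.memLp_sub.integrable_norm_pow two_ne_zero).add
            ((hπ.memLp_sub.integrable_real_inner hbπ).const_mul _)
        · exact (hbπ.integrable_norm_pow two_ne_zero).const_mul _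

end Wasserstein

theorem statement9_general {d : ℕ} (mhat : P2 d) (R : ℝ)
    (φ : P2 d → ℝ) (hφ : UCmem mhat φ) (κ ε : ℝ) (hκ : κ ∈ Ioc (0 : ℝ) 1) (hε : 0 < ε)
    (m : P2 d) (hm : W2 mhat m ≤ R) (μb : P2 d) (hek : EkelandPt φ κ ε m μb)
    (π : Measure (Ed d × Ed d)) (hπ : IsOptPlan π m μb)
    (b : Ed d → Ed d) (hb : Measurable b)
    (hb2 : ∫⁻ x, (‖b x‖₊ : ℝ≥0∞) ^ 2 ∂m.1 < ⊤)
    (τ : ℝ) (ν : P2 d) (hν : ν.1 = m.1.map fun x => x + τ • b x) :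
    infConv φ κ ν ≤ infConv φ κ m
      + τ * ∫ p, ⟪(κ ^ 2)⁻¹ • (p.1 - p.2), b p.1⟫_ℝ ∂π
      + τ ^ 2 / (2 * κ ^ 2) * ∫ x, ‖b x‖ ^ 2 ∂m.1
      + Nke mhat φ κ ε R m := by
  have hW2 := W2_sq_map_add_smul_le hπ.1 hb
    ((memLp_two_iff_lintegral_sq_lt_top hb.aestronglyMeasurable).2 hb2) τ hν
  rw [← hπ.W2_sq_eq_integral] at hW2
  have hinner : ∫ p, ⟪(κ ^ 2)⁻¹ • (p.1 - p.2), b p.1⟫_ℝ ∂π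
      = (κ ^ 2)⁻¹ * ∫ p, ⟪p.1 - p.2, b p.1⟫_ℝ ∂π := by
    simp_rw [real_inner_smul_left]
    exact integral_const_mul _ _
  calc infConv φ κ ν ≤ φ μb + 1 / (2 * κ ^ 2) * W2 ν μb ^ 2 := infConv_le hφ.nonneg ν μb
    _ ≤ φ μb + 1 / (2 * κ ^ 2) * W2 m μb ^ 2 + τ * ((κ ^ 2)⁻¹ * ∫ p, ⟪p.1 - p.2, b p.1⟫_ℝ ∂π)
        + τ ^ 2 / (2 * κ ^ 2) * ∫ x, ‖b x‖ ^ 2 ∂m.1 := by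
      linear_combination (1 / (2 * κ ^ 2)) * hW2
    _ ≤ _ := by
      rw [hinner]
      linarith [hek.le_infConv_add_Nke hφ hκ.1 hε.le hm]

/-- a Taylor-type expansion for the inf-convolution. -/
theorem statement9 {d : ℕ} (mhat : P2 d) (R : ℝ) (hR : 0 < R)
    (φ : P2 d → ℝ) (hφ : UCmem mhat φ) (κ ε : ℝ) (hκ : κ ∈ Ioc (0 : ℝ) 1) (hε : 0 < ε)
    (m : P2 d) (hm : W2 mhat m ≤ R) (μb : P2 d) (hek : EkelandPt φ κ ε m μb)
    (π : Measure (Ed d × Ed d)) (hπ : IsOptPlan π m μb)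
    (b : Ed d → Ed d) (hb : Measurable b)
    (hb2 : ∫⁻ x, (‖b x‖₊ : ℝ≥0∞) ^ 2 ∂m.1 < ⊤)
    (τ : ℝ) (hτ : 0 < τ) (ν : P2 d) (hν : ν.1 = m.1.map fun x => x + τ • b x) :
    infConv φ κ ν ≤ infConv φ κ m
      + τ * ∫ p, ⟪(κ ^ 2)⁻¹ • (p.1 - p.2), b p.1⟫_ℝ ∂π
      + τ ^ 2 / (2 * κ ^ 2) * ∫ x, ‖b x‖ ^ 2 ∂m.1
      + Nke mhat φ κ ε R m :=
  statement9_general mhat R φ hφ κ ε hκ hε m hm μb hek π hπ b hb hb2 τ ν hν
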